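/- The function g(k) = 64 K(k)² √(k⁴ - k² + 1) is strictly increasing on (0,1), satisfies g(k) → 16π² as k → 0⁺, and g(k) → +∞ as k → 1⁻. -/

import Mathlib

/-!
Differentiating under the integral sign, `K'(k) = ∫ k sin²θ (1 - k² sin²θ)^(-3/2) dθ`, which is at
least `∫ k sin²θ (1 - k² sin²θ)^(-1/2) dθ`. Pairing `θ` with `π/2 - θ` shows
`∫ (2 sin²θ - 1)(1 - k² sin²θ)^(-1/2) dθ ≥ 0`, hence `K' ≥ k K / 2`. With `p = k⁴ - k² + 1` this gives
`√p g' = 32 K (4 K' p + K p') ≥ 64 k K² (p + 2k² - 1) = 64 k K² (k⁴ + k²) > 0`.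

At `0`, `g` is continuous with `K(0) = π/2`. Near `1`, writing `c = √(1 - k²)`,
`1 - k² sin²θ = c² + k² cos²θ ≤ (c + π/2 - θ)²`, so `K(k) ≥ log ((c + π/2) / c) → ∞`.
-/

open Filter

/-- The complete elliptic integral of the first kind. -/
noncomputable def ellipticK (k : ℝ) : ℝ :=
  ∫ θ in (0:ℝ)..(Real.pi/2), 1 / Real.sqrt (1 - k^2 * Real.sin θ ^ 2)

/-- g(k) = 64 K(k)² √(k⁴ - k² + 1). -/
noncomputable def gFun (k : ℝ) : ℝ :=
  64 * ellipticK k ^ 2 * Real.sqrt (k^4 - k^2 + 1)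

open Real Set MeasureTheory Topology

lemma one_sub_sq_mul_sin_sq_pos {k : ℝ} (hk : k ^ 2 < 1) (θ : ℝ) :
    0 < 1 - k ^ 2 * sin θ ^ 2 := by
  nlinarith [sin_sq_le_one θ, mul_le_mul_of_nonneg_left (sin_sq_le_one θ) (sq_nonneg k)]

lemma continuous_div_sqrt_one_sub_sq_mul_sin_sq_pow {k : ℝ} (hk : k ^ 2 < 1) {f : ℝ → ℝ}
    (hf : Continuous f) (n : ℕ) : Continuous fun θ => f θ / √(1 - k ^ 2 * sin θ ^ 2) ^ n :=
  hf.div (by fun_prop) fun θ => (pow_pos (sqrt_pos.2 (one_sub_sq_mul_sin_sq_pos hk θ)) n).ne'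

lemma continuous_div_sqrt_one_sub_sq_mul_sin_sq {k : ℝ} (hk : k ^ 2 < 1) {f : ℝ → ℝ}
    (hf : Continuous f) : Continuous fun θ => f θ / √(1 - k ^ 2 * sin θ ^ 2) := by
  simpa using continuous_div_sqrt_one_sub_sq_mul_sin_sq_pow hk hf 1

lemma hasDerivAt_one_div_sqrt_one_sub_sq_mul {s x : ℝ} (hx : 0 < 1 - x ^ 2 * s) :
    HasDerivAt (fun y => 1 / √(1 - y ^ 2 * s)) (x * s / √(1 - x ^ 2 * s) ^ 3) x := by
  have hu : HasDerivAt (fun y => 1 - y ^ 2 * s) (-(2 * x * s)) x := by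
    simpa using ((hasDerivAt_pow 2 x).mul_const s).const_sub 1
  simp only [one_div]
  refine ((hu.sqrt hx.ne').inv (sqrt_pos.2 hx).ne').congr_deriv ?_
  field_simp

lemma hasDerivAt_ellipticK {k : ℝ} (hk : |k| < 1) :
    HasDerivAt ellipticK
      (∫ θ in (0)..(π / 2), k * sin θ ^ 2 / √(1 - k ^ 2 * sin θ ^ 2) ^ 3) k := by
  set r := (1 + |k|) / 2 with hr_def
  have hr : r < 1 := by linarith
  have hball_mem : Metric.ball k ((1 - |k|) / 2) ∈ 𝓝 k := Metric.ball_mem_nhds k (by linarith)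
  have hball : ∀ y ∈ Metric.ball k ((1 - |k|) / 2), |y| ≤ r := fun y hy => by
    rw [Metric.mem_ball, Real.dist_eq] at hy
    linarith [abs_sub_abs_le_abs_sub y k]
  have hsq : ∀ {y : ℝ}, |y| ≤ r → y ^ 2 < 1 := fun {y} hy => by
    rw [← sq_abs]; nlinarith [abs_nonneg y]
  have hk2 : k ^ 2 < 1 := hsq (by linarith)
  refine (intervalIntegral.hasDerivAt_integral_of_dominated_loc_of_deriv_le
    (F := fun y θ => 1 / √(1 - y ^ 2 * sin θ ^ 2))
    (F' := fun y θ => y * sin θ ^ 2 / √(1 - y ^ 2 * sin θ ^ 2) ^ 3)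
    (bound := fun _ => r / √(1 - r ^ 2) ^ 3) hball_mem ?_
    ((continuous_div_sqrt_one_sub_sq_mul_sin_sq hk2 continuous_const).intervalIntegrable _ _)
    (continuous_div_sqrt_one_sub_sq_mul_sin_sq_pow hk2 (by fun_prop) 3).aestronglyMeasurable
    ?_ intervalIntegrable_const ?_).2
  · filter_upwards [hball_mem] with y hy
    exact (continuous_div_sqrt_one_sub_sq_mul_sin_sq (hsq (hball y hy))
      continuous_const).aestronglyMeasurable
  · refine ae_of_all _ fun θ _ y hy => ?_
    have hyr := hball y hy
    have hy2 : y ^ 2 ≤ r ^ 2 := by rw [← sq_abs]; exact pow_le_pow_left₀ (abs_nonneg y) hyr 2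
    have hr2 : 0 < 1 - r ^ 2 := by nlinarith [abs_nonneg k]
    have hs := sin_sq_le_one θ
    have hle : 1 - r ^ 2 ≤ 1 - y ^ 2 * sin θ ^ 2 := by nlinarith [sq_nonneg (sin θ)]
    rw [norm_div, norm_mul, Real.norm_eq_abs, Real.norm_of_nonneg (sq_nonneg _),
      Real.norm_of_nonneg (by positivity)]
    gcongr
    exact mul_le_of_le_one_right (abs_nonneg y) hs |>.trans hyr
  · exact ae_of_all _ fun θ _ y hy =>
      hasDerivAt_one_div_sqrt_one_sub_sq_mul (one_sub_sq_mul_sin_sq_pos (hsq (hball y hy)) θ)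

lemma two_mul_sub_one_div_sqrt_add_nonneg {k s : ℝ} (hk : k ^ 2 < 1) (hs0 : 0 ≤ s) (hs1 : s ≤ 1) :
    0 ≤ (2 * s - 1) / √(1 - k ^ 2 * s) + (2 * (1 - s) - 1) / √(1 - k ^ 2 * (1 - s)) := by
  have ha : 0 < 1 - k ^ 2 * s := by nlinarith
  have hb : 0 < 1 - k ^ 2 * (1 - s) := by nlinarith
  have key : (2 * s - 1) / √(1 - k ^ 2 * s) + (2 * (1 - s) - 1) / √(1 - k ^ 2 * (1 - s)) =
      (2 * s - 1) * (1 / √(1 - k ^ 2 * s) - 1 / √(1 - k ^ 2 * (1 - s))) := by ring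
  rw [key]
  rcases le_total (1 / 2) s with hs | hs
  · refine mul_nonneg (by linarith) (sub_nonneg.2 ?_)
    exact one_div_le_one_div_of_le (sqrt_pos.2 ha) (sqrt_le_sqrt (by nlinarith))
  · refine mul_nonneg_of_nonpos_of_nonpos (by linarith) (sub_nonpos.2 ?_)
    exact one_div_le_one_div_of_le (sqrt_pos.2 hb) (sqrt_le_sqrt (by nlinarith))

lemma integral_two_mul_sin_sq_sub_one_div_sqrt_nonneg {k : ℝ} (hk : k ^ 2 < 1) :
    0 ≤ ∫ θ in (0)..(π / 2), (2 * sin θ ^ 2 - 1) / √(1 - k ^ 2 * sin θ ^ 2) := by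
  set f : ℝ → ℝ := fun θ => (2 * sin θ ^ 2 - 1) / √(1 - k ^ 2 * sin θ ^ 2)
  have hf : Continuous f := continuous_div_sqrt_one_sub_sq_mul_sin_sq hk (by fun_prop)
  have hrefl : ∫ θ in (0)..(π / 2), f (π / 2 - θ) = ∫ θ in (0)..(π / 2), f θ := by
    simp [intervalIntegral.integral_comp_sub_left f (π / 2)]
  have hsum : 2 * ∫ θ in (0)..(π / 2), f θ = ∫ θ in (0)..(π / 2), (f θ + f (π / 2 - θ)) := by
    rw [intervalIntegral.integral_add (hf.intervalIntegrable _ _)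
      (g := fun θ => f (π / 2 - θ)) ((hf.comp (continuous_sub_left _)).intervalIntegrable _ _),
      hrefl, two_mul]
  have hpair : 0 ≤ ∫ θ in (0)..(π / 2), (f θ + f (π / 2 - θ)) := by
    refine intervalIntegral.integral_nonneg (by positivity) fun θ _ => ?_
    have := two_mul_sub_one_div_sqrt_add_nonneg hk (sq_nonneg (sin θ)) (sin_sq_le_one θ)
    simpa only [f, sin_pi_div_two_sub, cos_sq', sq_nonneg] using this
  linarith

lemma half_mul_ellipticK_le {k : ℝ} (hk0 : 0 ≤ k) (hk : k ^ 2 < 1) :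
    k / 2 * ellipticK k ≤
      ∫ θ in (0)..(π / 2), k * sin θ ^ 2 / √(1 - k ^ 2 * sin θ ^ 2) ^ 3 := by
  have hI := integral_two_mul_sin_sq_sub_one_div_sqrt_nonneg hk
  calc k / 2 * ellipticK k
      ≤ k / 2 * ((∫ θ in (0)..(π / 2), (2 * sin θ ^ 2 - 1) / √(1 - k ^ 2 * sin θ ^ 2)) +
          ellipticK k) := by gcongr; linarith
    _ = ∫ θ in (0)..(π / 2), k * sin θ ^ 2 / √(1 - k ^ 2 * sin θ ^ 2) := by
      rw [ellipticK, ← intervalIntegral.integral_add, ← intervalIntegral.integral_const_mul]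
      · refine intervalIntegral.integral_congr fun θ _ => ?_
        field_simp
        ring
      · exact (continuous_div_sqrt_one_sub_sq_mul_sin_sq hk (by fun_prop)).intervalIntegrable _ _
      · exact (continuous_div_sqrt_one_sub_sq_mul_sin_sq hk continuous_const).intervalIntegrable _ _
    _ ≤ ∫ θ in (0)..(π / 2), k * sin θ ^ 2 / √(1 - k ^ 2 * sin θ ^ 2) ^ 3 := by
      refine intervalIntegral.integral_mono_on (by positivity)
        ((continuous_div_sqrt_one_sub_sq_mul_sin_sq hk (by fun_prop)).intervalIntegrable _ _)
        ((continuous_div_sqrt_one_sub_sq_mul_sin_sq_pow hk (by fun_prop) 3).intervalIntegrable _ _)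
        fun θ _ => ?_
      have hs := sqrt_pos.2 (one_sub_sq_mul_sin_sq_pos hk θ)
      have hs1 : √(1 - k ^ 2 * sin θ ^ 2) ≤ 1 := sqrt_le_one.2 (by nlinarith [sq_nonneg (sin θ)])
      gcongr
      calc √(1 - k ^ 2 * sin θ ^ 2) ^ 3 ≤ √(1 - k ^ 2 * sin θ ^ 2) ^ 1 :=
            pow_le_pow_of_le_one hs.le hs1 (by norm_num)
        _ = _ := pow_one _

lemma pi_div_two_le_ellipticK {k : ℝ} (hk : k ^ 2 < 1) : π / 2 ≤ ellipticK k := by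
  calc π / 2 = ∫ _ in (0)..(π / 2), (1 : ℝ) := by simp
    _ ≤ ellipticK k := by
      refine intervalIntegral.integral_mono_on (by positivity) intervalIntegrable_const
        ((continuous_div_sqrt_one_sub_sq_mul_sin_sq hk continuous_const).intervalIntegrable _ _)
        fun θ _ => ?_
      rw [le_div_iff₀ (sqrt_pos.2 (one_sub_sq_mul_sin_sq_pos hk θ)), one_mul]
      exact sqrt_le_one.2 (by nlinarith [sq_nonneg k, sq_nonneg (sin θ)])

lemma pow_four_sub_sq_add_one_pos (k : ℝ) : 0 < k ^ 4 - k ^ 2 + 1 := by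
  nlinarith [sq_nonneg (k ^ 2 - 1 / 2)]

lemma exists_hasDerivAt_gFun_pos {k : ℝ} (hk0 : 0 < k) (hk1 : k < 1) :
    ∃ g', HasDerivAt gFun g' k ∧ 0 < g' := by
  have hk2 : k ^ 2 < 1 := by nlinarith
  set K' := ∫ θ in (0)..(π / 2), k * sin θ ^ 2 / √(1 - k ^ 2 * sin θ ^ 2) ^ 3
  have hK := hasDerivAt_ellipticK (abs_lt.2 ⟨by linarith, hk1⟩)
  have hp : HasDerivAt (fun y => y ^ 4 - y ^ 2 + 1) (4 * k ^ 3 - 2 * k) k := by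
    simpa using ((hasDerivAt_pow 4 k).sub (hasDerivAt_pow 2 k)).add_const 1
  have hq := pow_four_sub_sq_add_one_pos k
  have hKpos : 0 < ellipticK k := by linarith [pi_div_two_le_ellipticK hk2, pi_pos]
  have hK' : k / 2 * ellipticK k ≤ K' := half_mul_ellipticK_le hk0.le hk2
  have hs : 0 < √(k ^ 4 - k ^ 2 + 1) := sqrt_pos.2 hq
  refine ⟨_, (((hK.pow 2).const_mul 64).mul (hp.sqrt hq.ne')).congr_deriv (g' :=
    (128 * ellipticK k * K' * (k ^ 4 - k ^ 2 + 1) + 32 * ellipticK k ^ 2 * (4 * k ^ 3 - 2 * k)) /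
      √(k ^ 4 - k ^ 2 + 1)) ?_, div_pos ?_ hs⟩
  · have hs2 := sq_sqrt hq.le
    generalize √(k ^ 4 - k ^ 2 + 1) = s at hs hs2 ⊢
    simp only [Pi.pow_apply]
    field_simp
    linear_combination (256 * ellipticK k * K') * hs2
  nlinarith [mul_le_mul_of_nonneg_left hK' (by positivity : 0 ≤ 128 * ellipticK k *
    (k ^ 4 - k ^ 2 + 1)), (by positivity : 0 < 64 * k * ellipticK k ^ 2 * (k ^ 4 + k ^ 2))]

lemma strictMonoOn_gFun : StrictMonoOn gFun (Ioo 0 1) := by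
  choose! g' hg' hpos using fun k (hk : k ∈ Ioo (0 : ℝ) 1) => exists_hasDerivAt_gFun_pos hk.1 hk.2
  refine strictMonoOn_of_hasDerivWithinAt_pos (f' := g') (convex_Ioo 0 1)
    (fun k hk => (hg' k hk).continuousAt.continuousWithinAt) (fun k hk => ?_) fun k hk => ?_
  · rw [interior_Ioo] at hk; exact (hg' k hk).hasDerivWithinAt
  · rw [interior_Ioo] at hk; exact hpos k hk

lemma ellipticK_zero : ellipticK 0 = π / 2 := by simp [ellipticK]

lemma tendsto_gFun_zero : Tendsto gFun (𝓝[>] 0) (𝓝 (16 * π ^ 2)) := by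
  have hK := (hasDerivAt_ellipticK (by simp : |(0 : ℝ)| < 1)).continuousAt
  have hg : ContinuousAt gFun 0 := (continuousAt_const.mul (hK.pow 2)).mul (by fun_prop)
  have hg0 : gFun 0 = 16 * π ^ 2 := by norm_num [gFun, ellipticK_zero]; ring
  exact hg0 ▸ hg.tendsto.mono_left nhdsWithin_le_nhds

lemma integral_one_div_add_sub {a c : ℝ} (ha : 0 ≤ a) (hc : 0 < c) :
    ∫ θ in (0)..a, 1 / (c + (a - θ)) = log ((c + a) / c) := by
  rw [intervalIntegral.integral_comp_sub_left (fun u => 1 / (c + u)), sub_self, sub_zero,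
    intervalIntegral.integral_comp_add_left (fun u => 1 / u), add_zero, integral_one_div]
  rw [uIcc_of_le (by linarith)]
  exact fun h => hc.not_ge h.1

lemma log_div_le_ellipticK {k : ℝ} (hk : k ^ 2 < 1) :
    log ((√(1 - k ^ 2) + π / 2) / √(1 - k ^ 2)) ≤ ellipticK k := by
  set c := √(1 - k ^ 2)
  have hc : 0 < c := sqrt_pos.2 (by linarith)
  have hc2 : c ^ 2 = 1 - k ^ 2 := sq_sqrt (by linarith)
  rw [← integral_one_div_add_sub pi_div_two_pos.le hc]
  refine intervalIntegral.integral_mono_on pi_div_two_pos.le ?_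
    ((continuous_div_sqrt_one_sub_sq_mul_sin_sq hk continuous_const).intervalIntegrable _ _)
    fun θ hθ => ?_
  · refine ContinuousOn.intervalIntegrable fun θ hθ => ?_
    rw [uIcc_of_le pi_div_two_pos.le] at hθ
    exact (continuousAt_const.div (by fun_prop) (by linarith [hθ.2])).continuousWithinAt
  have hcos : cos θ ≤ π / 2 - θ := by
    rw [← sin_pi_div_two_sub]; exact sin_le (by linarith [hθ.2])
  have hcos0 : 0 ≤ cos θ := cos_nonneg_of_mem_Icc ⟨by linarith [hθ.1, pi_pos], hθ.2⟩
  have hle : 1 - k ^ 2 * sin θ ^ 2 ≤ (c + (π / 2 - θ)) ^ 2 := by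
    nlinarith [sin_sq_add_cos_sq θ, mul_le_mul hcos hcos hcos0 (by linarith), sq_nonneg k,
      mul_nonneg hc.le hcos0, mul_le_mul_of_nonneg_left (sq_nonneg (cos θ)) (sq_nonneg k)]
  refine one_div_le_one_div_of_le (sqrt_pos.2 (one_sub_sq_mul_sin_sq_pos hk θ)) ?_
  exact sqrt_le_left (by linarith [hθ.2]) |>.mpr hle

lemma tendsto_ellipticK_one : Tendsto ellipticK (𝓝[<] 1) atTop := by
  have hnear : ∀ᶠ k in 𝓝[<] (1 : ℝ), k ^ 2 < 1 := by
    filter_upwards [Ioo_mem_nhdsLT (by norm_num : (-1 : ℝ) < 1)] with k hk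
    nlinarith [hk.1, hk.2]
  have hc : Tendsto (fun k : ℝ => √(1 - k ^ 2)) (𝓝[<] 1) (𝓝[>] 0) := by
    refine tendsto_nhdsWithin_iff.2 ⟨?_, hnear.mono fun k hk => sqrt_pos.2 (by linarith)⟩
    have : ContinuousAt (fun k : ℝ => √(1 - k ^ 2)) 1 := by fun_prop
    simpa using this.tendsto.mono_left nhdsWithin_le_nhds
  have hlog : Tendsto (fun k : ℝ => log ((√(1 - k ^ 2) + π / 2) / √(1 - k ^ 2))) (𝓝[<] 1)
      atTop := by
    refine tendsto_log_atTop.comp ((tendsto_atTop_add_const_left _ 1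
      (hc.inv_tendsto_nhdsGT_zero.const_mul_atTop pi_div_two_pos)).congr' ?_)
    filter_upwards [hnear] with k hk
    have : 0 < √(1 - k ^ 2) := sqrt_pos.2 (by linarith)
    simp only [Pi.inv_apply]
    field_simp
  exact tendsto_atTop_mono' _ (hnear.mono fun k hk => log_div_le_ellipticK hk) hlog

lemma tendsto_gFun_one : Tendsto gFun (𝓝[<] 1) atTop := by
  have hsqrt : Tendsto (fun k : ℝ => √(k ^ 4 - k ^ 2 + 1)) (𝓝[<] 1) (𝓝 1) := by
    have : ContinuousAt (fun k : ℝ => √(k ^ 4 - k ^ 2 + 1)) 1 := by fun_prop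
    simpa using this.tendsto.mono_left nhdsWithin_le_nhds
  exact (((tendsto_pow_atTop two_ne_zero).comp tendsto_ellipticK_one).const_mul_atTop
    (by norm_num)).atTop_mul_pos one_pos hsqrt

theorem stmt5 :
    StrictMonoOn gFun (Set.Ioo (0:ℝ) 1) ∧
    Tendsto gFun (nhdsWithin 0 (Set.Ioi 0)) (nhds (16 * Real.pi ^ 2)) ∧
    Tendsto gFun (nhdsWithin 1 (Set.Iio 1)) atTop :=
  ⟨strictMonoOn_gFun, tendsto_gFun_zero, tendsto_gFun_one⟩
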